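/- For all nonnegative integers x and y with (x,y) ∉ {(0,0),(1,1),(0,1),(1,0)}, G₁(x,y) = G₀(x,y); moreover G₁(0,0) = G₁(1,1) = 1 and G₁(0,1) = G₁(1,0) = 0, while G₀(0,0) = G₀(1,1) = 0 and G₀(0,1) = G₀(1,0) = 1. -/

import Mathlib

/-- mex: least nonnegative integer not in the finite set. -/
noncomputable def mexN (S : Finset ℕ) : ℕ := sInf {n : ℕ | n ∉ S}

/-- `G₀(x,y)`: `G₀(0,0) = 0` and for `x + y > 0`,
`G₀(x,y) = mex({G₀(x',y) : x' < x} ∪ {G₀(x,y') : y' < y})`. -/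
noncomputable def G0 : ℕ → ℕ → ℕ
  | x, y =>
    mexN (((Finset.range x).attach.image fun x' => G0 x'.1 y) ∪
          ((Finset.range y).attach.image fun y' => G0 x y'.1))
termination_by x y => x + y
decreasing_by
  · have := x'.2; simp only [Finset.mem_range] at this; omega
  · have := y'.2; simp only [Finset.mem_range] at this; omega

/-- `G₁(x,y)`: `G₁(0,0) = 1` and for `x + y > 0`,
`G₁(x,y) = mex({G₁(x',y) : x' < x} ∪ {G₁(x,y') : y' < y})`. -/
noncomputable def G1 : ℕ → ℕ → ℕ
  | x, y =>
    if x + y = 0 then 1 else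
    mexN (((Finset.range x).attach.image fun x' => G1 x'.1 y) ∪
          ((Finset.range y).attach.image fun y' => G1 x y'.1))
termination_by x y => x + y
decreasing_by
  · have := x'.2; simp only [Finset.mem_range] at this; omega
  · have := y'.2; simp only [Finset.mem_range] at this; omega

/-! Both functions are determined by their value at the origin through the mex recursion, so it
suffices to exhibit closed forms satisfying it. For `G₀` this is the nim-sum `x ^^^ y`. For `G₁` it
is the nim-sum with `0` and `1` exchanged on `{0, 1} × {0, 1}`: a row or column through a point
outside that square meets the square in nothing or in a whole pair, whose values the exchange
permutes, so the option sets, and hence the mex, are those of the nim-sum. -/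

open Finset

def rookOptions (g : ℕ → ℕ → ℕ) (x y : ℕ) : Finset ℕ :=
  (range x).image (g · y) ∪ (range y).image (g x ·)

lemma mem_rookOptions {g : ℕ → ℕ → ℕ} {x y n : ℕ} :
    n ∈ rookOptions g x y ↔ (∃ x' < x, g x' y = n) ∨ (∃ y' < y, g x y' = n) := by
  simp [rookOptions]

lemma rookOptions_congr {f g : ℕ → ℕ → ℕ} {x y : ℕ} (hrow : ∀ x' < x, f x' y = g x' y)
    (hcol : ∀ y' < y, f x y' = g x y') : rookOptions f x y = rookOptions g x y := by
  unfold rookOptions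
  rw [image_congr fun x' hx' => hrow x' (mem_range.mp hx'),
    image_congr fun y' hy' => hcol y' (mem_range.mp hy')]

lemma mexN_eq {S : Finset ℕ} {n : ℕ} (hn : n ∉ S) (hlt : ∀ m < n, m ∈ S) : mexN S = n :=
  le_antisymm (Nat.sInf_le hn)
    (not_lt.mp fun h => Nat.sInf_mem (s := {k | k ∉ S}) ⟨n, hn⟩ (hlt _ h))

lemma G0_eq_mexN (x y : ℕ) : G0 x y = mexN (rookOptions G0 x y) := by
  rw [G0]
  congr 1
  ext n
  simp [rookOptions]

lemma G1_eq_mexN {x y : ℕ} (hxy : x + y ≠ 0) : G1 x y = mexN (rookOptions G1 x y) := by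
  rw [G1, if_neg hxy]
  congr 1
  ext n
  simp [rookOptions]

theorem eq_of_eq_mexN_rookOptions {f g : ℕ → ℕ → ℕ} (h₀ : f 0 0 = g 0 0)
    (hf : ∀ x y, x + y ≠ 0 → f x y = mexN (rookOptions f x y))
    (hg : ∀ x y, x + y ≠ 0 → g x y = mexN (rookOptions g x y)) : f = g := by
  funext x y
  induction hn : x + y using Nat.strong_induction_on generalizing x y with
  | _ n ih =>
    by_cases hxy : x + y = 0
    · obtain ⟨rfl, rfl⟩ : x = 0 ∧ y = 0 := by omega
      exact h₀
    rw [hf x y hxy, hg x y hxy, rookOptions_congr]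
    · exact fun x' hx' => ih (x' + y) (by omega) x' y rfl
    · exact fun y' hy' => ih (x + y') (by omega) x y' rfl

theorem xor_eq_mexN_rookOptions (x y : ℕ) : x ^^^ y = mexN (rookOptions (· ^^^ ·) x y) := by
  refine (mexN_eq ?_ fun m hm => ?_).symm <;> rw [mem_rookOptions]
  · rintro (⟨x', hx', h⟩ | ⟨y', hy', h⟩)
    · exact hx'.ne (Nat.xor_left_inj.mp h)
    · exact hy'.ne (Nat.xor_right_inj.mp h)
  · rcases Nat.lt_xor_cases hm with h | h
    · exact .inl ⟨m ^^^ y, h, Nat.xor_xor_cancel_right m y⟩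
    · exact .inr ⟨m ^^^ x, h, by rw [Nat.xor_comm, Nat.xor_xor_cancel_right]⟩

theorem G0_eq_xor : G0 = (· ^^^ ·) := by
  refine eq_of_eq_mexN_rookOptions ?_ (fun x y _ => G0_eq_mexN x y)
    (fun x y _ => xor_eq_mexN_rookOptions x y)
  rw [G0_eq_mexN]
  exact mexN_eq (by simp [rookOptions]) (by simp)

def flippedNimSum (x y : ℕ) : ℕ := if x ≤ 1 ∧ y ≤ 1 then x ^^^ y ^^^ 1 else x ^^^ y

lemma flippedNimSum_comm (x y : ℕ) : flippedNimSum x y = flippedNimSum y x := by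
  simp only [flippedNimSum, and_comm, Nat.xor_comm x y]

lemma flippedNimSum_of_le_one {x y : ℕ} (hx : x ≤ 1) (hy : y ≤ 1) :
    flippedNimSum x y = (x ^^^ 1) ^^^ y := by
  interval_cases x <;> interval_cases y <;> rfl

/-- Since `x' ↦ x' ^^^ 1` permutes `{0, 1} ⊆ range x`, the flip does not change the row options. -/
lemma image_range_flippedNimSum {x y : ℕ} (h : 2 ≤ x ∨ 2 ≤ y) :
    (range x).image (flippedNimSum · y) = (range x).image (· ^^^ y) := by
  rcases le_or_gt 2 y with hy | hy
  · exact image_congr fun x' _ => if_neg (by omega)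
  have hx : 2 ≤ x := by omega
  have hswap : ∀ x' ≤ 1, x' ^^^ 1 ≤ 1 := by
    intro x' hx'
    interval_cases x' <;> decide
  ext n
  simp only [mem_image, mem_range]
  constructor
  · rintro ⟨x', hx', rfl⟩
    by_cases hx'1 : x' ≤ 1
    · exact ⟨x' ^^^ 1, (hswap x' hx'1).trans_lt hx,
        (flippedNimSum_of_le_one hx'1 (by omega)).symm⟩
    · exact ⟨x', hx', (if_neg (by omega)).symm⟩
  · rintro ⟨x', hx', rfl⟩
    by_cases hx'1 : x' ≤ 1
    · refine ⟨x' ^^^ 1, (hswap x' hx'1).trans_lt hx, ?_⟩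
      rw [flippedNimSum_of_le_one (hswap x' hx'1) (by omega), Nat.xor_xor_cancel_right]
    · exact ⟨x', hx', if_neg (by omega)⟩

lemma rookOptions_flippedNimSum {x y : ℕ} (h : 2 ≤ x ∨ 2 ≤ y) :
    rookOptions flippedNimSum x y = rookOptions (· ^^^ ·) x y := by
  unfold rookOptions
  simp_rw [flippedNimSum_comm x]
  rw [image_range_flippedNimSum h, image_range_flippedNimSum h.symm]
  simp_rw [Nat.xor_comm _ x]

theorem flippedNimSum_eq_mexN_rookOptions {x y : ℕ} (hxy : x + y ≠ 0) :
    flippedNimSum x y = mexN (rookOptions flippedNimSum x y) := by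
  by_cases h : 2 ≤ x ∨ 2 ≤ y
  · rw [rookOptions_flippedNimSum h, ← xor_eq_mexN_rookOptions]
    exact if_neg (by omega)
  · obtain ⟨hx, hy⟩ : x ≤ 1 ∧ y ≤ 1 := by omega
    interval_cases x <;> interval_cases y <;> first
      | omega
      | exact (mexN_eq (by decide) (by decide)).symm

theorem G1_eq_flippedNimSum : G1 = flippedNimSum :=
  eq_of_eq_mexN_rookOptions (by rw [G1, if_pos rfl]; rfl) (fun _ _ => G1_eq_mexN)
    (fun _ _ => flippedNimSum_eq_mexN_rookOptions)

theorem G1_eq_G0_except :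
    (∀ x y : ℕ, (x, y) ≠ (0, 0) → (x, y) ≠ (1, 1) → (x, y) ≠ (0, 1) → (x, y) ≠ (1, 0) →
      G1 x y = G0 x y) ∧
    G1 0 0 = 1 ∧ G1 1 1 = 1 ∧ G1 0 1 = 0 ∧ G1 1 0 = 0 ∧
    G0 0 0 = 0 ∧ G0 1 1 = 0 ∧ G0 0 1 = 1 ∧ G0 1 0 = 1 := by
  rw [G1_eq_flippedNimSum, G0_eq_xor]
  refine ⟨fun x y h00 h11 h01 h10 => if_neg ?_, by decide⟩
  simp only [ne_eq, Prod.mk.injEq] at h00 h11 h01 h10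
  omega
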